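/- arXiv:math/0702495 — 3 statements merged into one kernel-verified Lean document; each statement's English description precedes it below -/
import Mathlib

section
/- Every element of PL(ℝ) can be written as a composite of two elements of PL(ℝ), each of which is reversible in PL(ℝ) (i.e., each is conjugated to its inverse by some element of PL(ℝ)). In other words, PL(ℝ) = R₂(PL(ℝ)). -/
/-- `f` is a homeomorphism of `ℝ`: a bijection of `ℝ` that is continuous in both directions. -/
def IsHomeo (f : Equiv.Perm ℝ) : Prop := Continuous f ∧ Continuous f.symm

/-- `f` is locally affine at `x`: it agrees with an affine map on a neighbourhood of `x`. -/
def IsLocallyAffineAt (f : ℝ → ℝ) (x : ℝ) : Prop :=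
  ∃ a b : ℝ, ∀ᶠ y in nhds x, f y = a * y + b

/-- Membership in PLF(ℝ): a homeomorphism of `ℝ` that is locally affine at all but
finitely many points. -/
def InPLF (f : Equiv.Perm ℝ) : Prop :=
  IsHomeo f ∧ {x : ℝ | ¬ IsLocallyAffineAt (⇑f) x}.Finite

/-- Membership in PL(ℝ): a homeomorphism of `ℝ` whose set of points of non-local-affinity
has no accumulation point in `ℝ`. -/
def InPL (f : Equiv.Perm ℝ) : Prop :=
  IsHomeo f ∧ ∀ x : ℝ, ¬ AccPt x (Filter.principal {y : ℝ | ¬ IsLocallyAffineAt (⇑f) y})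


/-!
Write `f = ι⁻¹ * (ι * f)` with `ι` reversible and `ι ∘ f < id`; it then suffices that every `A`
with `A < id` (equivalently `A⁻¹ > id`) is reversible. If `A > id`, the orbit `n ↦ A ^ n 0` cuts `ℝ`
into fundamental intervals, and gluing the maps `x ↦ (A ^ (-n)) x / A 0 + n` along them gives a
PL conjugacy from `A` to the translation `x ↦ x + 1`, which `x ↦ -x` reverses.

To find `ι`, let `U` be the piecewise linear homeomorphism with `U (z n) = n` for a suitable
sequence `z`. If `f` is increasing, take `z` with `f (z n) ≤ z (n + 1)` (an orbit of
`max f (· + 1)`) and `ι = U⁻¹ (· - 2) U`. If `f` is decreasing, take `z` with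
`z (-n) ≤ f (z (n + 1))` and the involution `ι = U⁻¹ (-·) U`.
-/

open Filter Set Topology Function

lemma eventually_codiscrete_iff {X : Type*} [TopologicalSpace X] {p : X → Prop} :
    (∀ᶠ x in codiscrete X, p x) ↔ ∀ x, ∀ᶠ y in 𝓝[≠] x, p y := by
  simp only [Filter.Eventually, mem_codiscrete, disjoint_principal_right, compl_compl]

lemma Continuous.tendsto_codiscrete {X Y : Type*} [TopologicalSpace X] [TopologicalSpace Y]
    {f : X → Y} (hf : Continuous f) (hinj : Injective f) :
    Tendsto f (codiscrete X) (codiscrete Y) := fun s hs => by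
  refine eventually_codiscrete_iff.2 fun x => ?_
  have hne : Tendsto f (𝓝[≠] x) (𝓝[≠] (f x)) :=
    tendsto_nhdsWithin_of_tendsto_nhds_of_eventually_within f
      (hf.continuousAt.tendsto.mono_left nhdsWithin_le_nhds)
      (eventually_nhdsWithin_of_forall fun y hy => hinj.ne hy)
  exact hne.eventually (eventually_codiscrete_iff.1 hs (f x))

lemma inPL_iff {f : Equiv.Perm ℝ} :
    InPL f ↔ IsHomeo f ∧ ∀ᶠ x in codiscrete ℝ, IsLocallyAffineAt f x := by
  simp only [InPL, Filter.Eventually, mem_codiscrete_accPt, compl_ofPred]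

section IsLocallyAffineAt

variable {f g : ℝ → ℝ} {x : ℝ}

lemma IsLocallyAffineAt.congr (hf : IsLocallyAffineAt f x) (h : f =ᶠ[𝓝 x] g) :
    IsLocallyAffineAt g x := by
  obtain ⟨a, b, hab⟩ := hf
  exact ⟨a, b, (h.and hab).mono fun y hy => hy.1 ▸ hy.2⟩

lemma IsLocallyAffineAt.const_mul_add (hf : IsLocallyAffineAt f x) (a b : ℝ) :
    IsLocallyAffineAt (fun y => a * f y + b) x := by
  obtain ⟨c, d, hcd⟩ := hf
  exact ⟨a * c, a * d + b, hcd.mono fun y hy => by simp only [hy]; ring⟩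

lemma IsLocallyAffineAt.comp (hf : IsLocallyAffineAt f (g x)) (hg : IsLocallyAffineAt g x)
    (hgc : ContinuousAt g x) : IsLocallyAffineAt (f ∘ g) x := by
  obtain ⟨a, b, hab⟩ := hf
  obtain ⟨c, d, hcd⟩ := hg
  refine ⟨a * c, a * d + b, ((hgc.eventually hab).and hcd).mono fun y ⟨hfy, hgy⟩ => ?_⟩
  rw [comp_apply, hfy, hgy]
  ring

/-- The slope is nonzero since `e` is injective. -/
lemma IsLocallyAffineAt.symm {e : Equiv.Perm ℝ} {y : ℝ} (he : IsLocallyAffineAt e (e.symm y))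
    (hc : ContinuousAt e.symm y) : IsLocallyAffineAt e.symm y := by
  obtain ⟨a, b, hab⟩ := he
  have ha : a ≠ 0 := by
    rintro rfl
    obtain ⟨t, ht, hne⟩ :=
      ((hab.filter_mono nhdsWithin_le_nhds).and (self_mem_nhdsWithin (s := {e.symm y}ᶜ))).exists
    exact hne (e.injective (by rw [ht, hab.self_of_nhds]; ring))
  refine ⟨a⁻¹, -b / a, (hc.eventually hab).mono fun t ht => ?_⟩
  rw [Equiv.apply_symm_apply] at ht
  field_simp
  linarith

end IsLocallyAffineAt

lemma InPL.mul {f g : Equiv.Perm ℝ} (hf : InPL f) (hg : InPL g) : InPL (f * g) := by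
  rw [inPL_iff] at *
  obtain ⟨⟨hfc, hfc'⟩, hfa⟩ := hf
  obtain ⟨⟨hgc, hgc'⟩, hga⟩ := hg
  refine ⟨⟨hfc.comp hgc, hgc'.comp hfc'⟩, ?_⟩
  filter_upwards [hga, (hgc.tendsto_codiscrete g.injective).eventually hfa] with x hgx hfx
  exact hfx.comp hgx hgc.continuousAt

lemma InPL.inv {f : Equiv.Perm ℝ} (hf : InPL f) : InPL f⁻¹ := by
  rw [inPL_iff] at *
  obtain ⟨⟨hfc, hfc'⟩, hfa⟩ := hf
  refine ⟨⟨hfc', hfc⟩, ?_⟩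
  filter_upwards [(hfc'.tendsto_codiscrete f.symm.injective).eventually hfa] with y hy
  exact hy.symm hfc'.continuousAt

lemma inPL_of_forall_isLocallyAffineAt {f : Equiv.Perm ℝ} (hf : IsHomeo f)
    (h : ∀ x, IsLocallyAffineAt f x) : InPL f :=
  inPL_iff.2 ⟨hf, .of_forall h⟩

def plSubgroup : Subgroup (Equiv.Perm ℝ) where
  carrier := {f | InPL f}
  mul_mem' := InPL.mul
  one_mem' := inPL_of_forall_isLocallyAffineAt ⟨continuous_id, continuous_id⟩
    fun _ => ⟨1, 0, .of_forall fun y => by simp⟩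
  inv_mem' := InPL.inv

lemma addRight_mem_plSubgroup (c : ℝ) : Equiv.addRight c ∈ plSubgroup :=
  inPL_of_forall_isLocallyAffineAt
    ⟨by simpa using continuous_add_const c, by simpa using continuous_add_const (-c)⟩
    fun _ => ⟨1, c, .of_forall fun y => by simp⟩

lemma neg_mem_plSubgroup : Equiv.neg ℝ ∈ plSubgroup :=
  inPL_of_forall_isLocallyAffineAt ⟨by simpa using continuous_neg, by simpa using continuous_neg⟩
    fun _ => ⟨-1, 0, .of_forall fun y => by simp⟩

def IsReversibleIn {G : Type*} [Group G] (H : Subgroup G) (g : G) : Prop :=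
  ∃ k ∈ H, k * g * k⁻¹ = g⁻¹

namespace IsReversibleIn

variable {G : Type*} [Group G] {H : Subgroup G} {g : G}

lemma inv (hg : IsReversibleIn H g) : IsReversibleIn H g⁻¹ := by
  obtain ⟨k, hk, hkg⟩ := hg
  refine ⟨k, hk, ?_⟩
  calc k * g⁻¹ * k⁻¹ = (k * g * k⁻¹)⁻¹ := by group
    _ = g⁻¹⁻¹ := by rw [hkg]

lemma conj (hg : IsReversibleIn H g) {u : G} (hu : u ∈ H) : IsReversibleIn H (u⁻¹ * g * u) := by
  obtain ⟨k, hk, hkg⟩ := hg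
  refine ⟨u⁻¹ * k * u, mul_mem (mul_mem (inv_mem hu) hk) hu, ?_⟩
  calc u⁻¹ * k * u * (u⁻¹ * g * u) * (u⁻¹ * k * u)⁻¹ = u⁻¹ * (k * g * k⁻¹) * u := by group
    _ = (u⁻¹ * g * u)⁻¹ := by rw [hkg]; group

end IsReversibleIn

lemma isReversibleIn_addRight (c : ℝ) : IsReversibleIn plSubgroup (Equiv.addRight c) :=
  ⟨Equiv.neg ℝ, neg_mem_plSubgroup, by ext x; simp [add_comm]⟩

lemma isReversibleIn_neg : IsReversibleIn plSubgroup (Equiv.neg ℝ) :=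
  ⟨1, one_mem _, by ext x; simp⟩

section IntervalPartition

variable {z : ℤ → ℝ}

lemma StrictMono.exists_mem_Ico (hz : StrictMono z) (htop : Tendsto z atTop atTop)
    (hbot : Tendsto z atBot atBot) (x : ℝ) : ∃ n, x ∈ Ico (z n) (z (n + 1)) := by
  obtain ⟨m, hm⟩ := (htop.eventually_gt_atTop x).exists
  obtain ⟨n, hn, hmax⟩ := Int.exists_greatest_of_bdd
    ⟨m, fun k hk => (hz.lt_iff_lt.1 (hk.trans_lt hm)).le⟩ (hbot.eventually_le_atBot x).exists
  exact ⟨n, hn, lt_of_not_ge fun h => (hmax _ h).not_gt (lt_add_one n)⟩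

lemma StrictMono.eq_of_mem_Ico (hz : StrictMono z) {x : ℝ} {m n : ℤ}
    (hm : x ∈ Ico (z m) (z (m + 1))) (hn : x ∈ Ico (z n) (z (n + 1))) : m = n := by
  by_contra hne
  rcases lt_or_gt_of_ne hne with h | h
  · exact (hm.2.trans_le (hz.monotone (by omega : m + 1 ≤ n))).not_ge hn.1
  · exact (hn.2.trans_le (hz.monotone (by omega : n + 1 ≤ m))).not_ge hm.1

end IntervalPartition

/-- Pieces `F n : [z n, z (n + 1)] → [n, n + 1]` to be glued into one homeomorphism of `ℝ`. -/
structure GluingData where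
  z : ℤ → ℝ
  F : ℤ → ℝ → ℝ
  strictMono_z : StrictMono z
  tendsto_atTop : Tendsto z atTop atTop
  tendsto_atBot : Tendsto z atBot atBot
  F_left : ∀ n, F n (z n) = n
  F_right : ∀ n, F n (z (n + 1)) = n + 1
  strictMonoOn_F : ∀ n, StrictMonoOn (F n) (Icc (z n) (z (n + 1)))
  continuousOn_F : ∀ n, ContinuousOn (F n) (Icc (z n) (z (n + 1)))

namespace GluingData

variable (G : GluingData) {x : ℝ} {n : ℤ}

lemma exists_mem_Ico (x : ℝ) : ∃ n, x ∈ Ico (G.z n) (G.z (n + 1)) :=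
  G.strictMono_z.exists_mem_Ico G.tendsto_atTop G.tendsto_atBot x

noncomputable def toFun (x : ℝ) : ℝ := G.F (G.exists_mem_Ico x).choose x

lemma toFun_eq (hx : x ∈ Ico (G.z n) (G.z (n + 1))) : G.toFun x = G.F n x := by
  rw [toFun, G.strictMono_z.eq_of_mem_Ico (G.exists_mem_Ico x).choose_spec hx]

lemma z_le_z_succ (n : ℤ) : G.z n ≤ G.z (n + 1) := (G.strictMono_z (lt_add_one n)).le

lemma toFun_mem_Ico (hx : x ∈ Ico (G.z n) (G.z (n + 1))) : G.toFun x ∈ Ico (n : ℝ) (n + 1) := by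
  have hIcc := Ico_subset_Icc_self hx
  rw [G.toFun_eq hx]
  exact ⟨G.F_left n ▸ (G.strictMonoOn_F n).monotoneOn (left_mem_Icc.2 (G.z_le_z_succ n)) hIcc hx.1,
    G.F_right n ▸ G.strictMonoOn_F n hIcc (right_mem_Icc.2 (G.z_le_z_succ n)) hx.2⟩

lemma strictMono_toFun : StrictMono G.toFun := by
  intro x y hxy
  obtain ⟨m, hx⟩ := G.exists_mem_Ico x
  obtain ⟨n, hy⟩ := G.exists_mem_Ico y
  have hmn : m ≤ n := by
    by_contra! h
    exact (hy.2.trans_le (G.strictMono_z.monotone (by omega : n + 1 ≤ m))).not_ge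
      (hx.1.trans hxy.le)
  rcases hmn.lt_or_eq with h | rfl
  · have hcast : (m : ℝ) + 1 ≤ n := by exact_mod_cast h
    linarith [(G.toFun_mem_Ico hx).2, (G.toFun_mem_Ico hy).1]
  · rw [G.toFun_eq hx, G.toFun_eq hy]
    exact G.strictMonoOn_F m (Ico_subset_Icc_self hx) (Ico_subset_Icc_self hy) hxy

lemma surjective_toFun : Surjective G.toFun := by
  intro t
  obtain ⟨x, hx, hFx⟩ := intermediate_value_Icc (G.z_le_z_succ ⌊t⌋) (G.continuousOn_F ⌊t⌋)
    (by rw [G.F_left, G.F_right]; exact ⟨Int.floor_le t, (Int.lt_floor_add_one t).le⟩)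
  have hx' : x < G.z (⌊t⌋ + 1) := hx.2.lt_of_ne <| by
    rintro rfl
    rw [G.F_right] at hFx
    linarith [Int.lt_floor_add_one t]
  exact ⟨x, (G.toFun_eq ⟨hx.1, hx'⟩).trans hFx⟩

noncomputable def toOrderIso : ℝ ≃o ℝ :=
  StrictMono.orderIsoOfSurjective G.toFun G.strictMono_toFun G.surjective_toFun

lemma toOrderIso_apply (x : ℝ) : G.toOrderIso x = G.toFun x := rfl

lemma toOrderIso_z (n : ℤ) : G.toOrderIso (G.z n) = n := by
  rw [toOrderIso_apply, G.toFun_eq ⟨le_rfl, G.strictMono_z (lt_add_one n)⟩, G.F_left]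

lemma isLocallyAffineAt_toFun {y : ℝ} (hy : y ∈ Ioo (G.z n) (G.z (n + 1)))
    (h : IsLocallyAffineAt (G.F n) y) : IsLocallyAffineAt G.toFun y :=
  h.congr <| eventually_of_mem (isOpen_Ioo.mem_nhds hy) fun _ ht =>
    (G.toFun_eq ⟨ht.1.le, ht.2⟩).symm

lemma toEquiv_mem_plSubgroup (hF : ∀ n, ∀ᶠ x in codiscrete ℝ, IsLocallyAffineAt (G.F n) x) :
    G.toOrderIso.toEquiv ∈ plSubgroup := by
  refine inPL_iff.2 ⟨⟨G.toOrderIso.continuous, G.toOrderIso.symm.continuous⟩,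
    eventually_codiscrete_iff.2 fun x => ?_⟩
  have hFx (n : ℤ) := eventually_codiscrete_iff.1 (hF n) x
  obtain ⟨n, hx⟩ := G.exists_mem_Ico x
  obtain ⟨m, hm, hxm⟩ : ∃ m, G.z m < x ∧ x ≤ G.z (m + 1) := by
    rcases hx.1.lt_or_eq with h | h
    · exact ⟨n, h, hx.2.le⟩
    · exact ⟨n - 1, h ▸ G.strictMono_z (sub_one_lt n), by rw [sub_add_cancel, h]⟩
  rw [← nhdsLT_sup_nhdsGT, eventually_sup]
  constructor
  · filter_upwards [Ioo_mem_nhdsLT hm, (hFx m).filter_mono (nhdsLT_le_nhdsNE x)] with y hy hFy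
    exact G.isLocallyAffineAt_toFun ⟨hy.1, hy.2.trans_le hxm⟩ hFy
  · filter_upwards [Ioo_mem_nhdsGT hx.2, (hFx n).filter_mono (nhdsGT_le_nhdsNE x)] with y hy hFy
    exact G.isLocallyAffineAt_toFun ⟨hx.1.trans_lt hy.1, hy.2⟩ hFy

end GluingData

lemma Equiv.Perm.zpow_add_one_apply {α : Type*} (σ : Equiv.Perm α) (n : ℤ) (x : α) :
    (σ ^ (n + 1)) x = σ ((σ ^ n) x) := by
  rw [add_comm, zpow_one_add, Equiv.Perm.mul_apply]

lemma Equiv.Perm.strictMono_zpow {α : Type*} [LinearOrder α] {σ : Equiv.Perm α}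
    (hσ : StrictMono σ) (n : ℤ) : StrictMono ⇑(σ ^ n) := by
  have hinv : StrictMono ⇑σ⁻¹ := fun x y h => hσ.lt_iff_lt.1 (by simpa using h)
  induction n using Int.induction_on with
  | zero => simpa using strictMono_id
  | succ k ih => rw [zpow_add_one]; exact ih.comp hσ
  | pred k ih => rw [zpow_sub_one]; exact ih.comp hinv

section Orbit

variable {A : Equiv.Perm ℝ}

lemma strictMono_of_lt_apply (hA : Continuous A) (hlt : ∀ x, x < A x) : StrictMono A :=
  (hA.strictMono_of_inj A.injective).resolve_right fun hanti => (hlt (A 0)).not_gt (hanti (hlt 0))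

lemma strictMono_zpow_apply (hlt : ∀ x, x < A x) (x₀ : ℝ) :
    StrictMono fun n : ℤ => (A ^ n) x₀ :=
  strictMono_int_of_lt_succ fun n => by
    simp only [Equiv.Perm.zpow_add_one_apply]
    exact hlt _

/-- A bounded orbit would converge to a fixed point of `A`. -/
lemma tendsto_zpow_apply_atTop (hA : Continuous A) (hlt : ∀ x, x < A x) (x₀ : ℝ) :
    Tendsto (fun n : ℤ => (A ^ n) x₀) atTop atTop := by
  refine tendsto_atTop_atTop_of_monotone (strictMono_zpow_apply hlt x₀).monotone fun b => ?_
  by_contra! hb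
  set s : ℕ → ℝ := fun k => (A ^ (k : ℤ)) x₀
  have hs : Monotone s := fun i j hij =>
    (strictMono_zpow_apply hlt x₀).monotone (by exact_mod_cast hij)
  have hL := tendsto_atTop_ciSup hs ⟨b, forall_mem_range.2 fun k => (hb k).le⟩
  have hstep : Tendsto (fun k => A (s k)) atTop (𝓝 (⨆ k, s k)) := by
    refine (hL.comp (tendsto_add_atTop_nat 1)).congr fun k => ?_
    simp only [comp_apply, s, Nat.cast_add, Nat.cast_one, Equiv.Perm.zpow_add_one_apply]
  exact (hlt _).ne' (tendsto_nhds_unique ((hA.tendsto _).comp hL) hstep)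

lemma tendsto_zpow_apply_atBot (hA : Continuous A) (hlt : ∀ x, x < A x) (x₀ : ℝ) :
    Tendsto (fun n : ℤ => (A ^ n) x₀) atBot atBot := by
  refine tendsto_atBot_atBot_of_monotone (strictMono_zpow_apply hlt x₀).monotone fun b => ?_
  by_contra! hb
  set s : ℕ → ℝ := fun k => (A ^ (-k : ℤ)) x₀
  have hs : Antitone s := fun i j hij =>
    (strictMono_zpow_apply hlt x₀).monotone (by simpa using hij)
  have hL := tendsto_atTop_ciInf hs ⟨b, forall_mem_range.2 fun k => (hb _).le⟩
  have hstep : Tendsto (fun k => A (s (k + 1))) atTop (𝓝 (⨅ k, s k)) := by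
    refine hL.congr fun k => ?_
    simp only [s, ← Equiv.Perm.zpow_add_one_apply]
    congr 2
    push_cast
    ring
  exact (hlt _).ne' (tendsto_nhds_unique
    ((hA.tendsto _).comp (hL.comp (tendsto_add_atTop_nat 1))) hstep)

end Orbit

lemma exists_conj_eq_addRight_one {A : Equiv.Perm ℝ} (hA : A ∈ plSubgroup) (hlt : ∀ x, x < A x) :
    ∃ χ ∈ plSubgroup, A = χ⁻¹ * Equiv.addRight 1 * χ := by
  have hAc : Continuous A := hA.1.1
  have hAmono := strictMono_of_lt_apply hAc hlt
  have hd : 0 < A 0 := hlt 0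
  let G : GluingData :=
    { z := fun n => (A ^ n) 0
      F := fun n x => (A 0)⁻¹ * (A ^ (-n)) x + n
      strictMono_z := strictMono_zpow_apply hlt 0
      tendsto_atTop := tendsto_zpow_apply_atTop hAc hlt 0
      tendsto_atBot := tendsto_zpow_apply_atBot hAc hlt 0
      F_left := fun n => by
        simp only [zpow_neg, Equiv.Perm.coe_inv, Equiv.symm_apply_apply, mul_zero, zero_add]
      F_right := fun n => by
        simp only [zpow_neg, zpow_add_one, Equiv.Perm.mul_apply, Equiv.Perm.coe_inv,
          Equiv.symm_apply_apply, inv_mul_cancel₀ hd.ne', add_comm]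
      strictMonoOn_F := fun n a _ b _ h => add_lt_add_left
        (mul_lt_mul_of_pos_left (Equiv.Perm.strictMono_zpow hAmono _ h) (inv_pos.2 hd)) _
      continuousOn_F := fun n => by
        have := (zpow_mem hA (-n)).1.1
        fun_prop }
  refine ⟨G.toOrderIso.toEquiv, G.toEquiv_mem_plSubgroup fun n => ?_, ?_⟩
  · exact (inPL_iff.1 (zpow_mem hA (-n))).2.mono fun x hx => hx.const_mul_add _ _
  ext x
  obtain ⟨n, hx⟩ := G.exists_mem_Ico x
  have hAx : A x ∈ Ico (G.z (n + 1)) (G.z (n + 1 + 1)) := by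
    have h := hx
    simp only [G, Equiv.Perm.zpow_add_one_apply] at h ⊢
    exact ⟨hAmono.monotone h.1, hAmono h.2⟩
  have key : G.toOrderIso (A x) = G.toOrderIso x + 1 := by
    rw [G.toOrderIso_apply, G.toOrderIso_apply, G.toFun_eq hAx, G.toFun_eq hx]
    simp only [G, neg_add, zpow_add, zpow_neg_one, Equiv.Perm.mul_apply, Equiv.Perm.coe_inv,
      Equiv.symm_apply_apply, Int.cast_add, Int.cast_one]
    ring
  simp [← key]

lemma isReversibleIn_of_lt_apply {A : Equiv.Perm ℝ} (hA : A ∈ plSubgroup) (hlt : ∀ x, x < A x) :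
    IsReversibleIn plSubgroup A := by
  obtain ⟨χ, hχ, rfl⟩ := exists_conj_eq_addRight_one hA hlt
  exact (isReversibleIn_addRight 1).conj hχ

lemma isReversibleIn_of_apply_lt {A : Equiv.Perm ℝ} (hA : A ∈ plSubgroup) (hlt : ∀ x, A x < x) :
    IsReversibleIn plSubgroup A :=
  inv_inv A ▸ (isReversibleIn_of_lt_apply (inv_mem hA) fun x => by simpa using hlt (A⁻¹ x)).inv

noncomputable def linearInterpolation (z : ℤ → ℝ) (hz : StrictMono z)
    (htop : Tendsto z atTop atTop) (hbot : Tendsto z atBot atBot) : GluingData where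
  z := z
  F n x := (z (n + 1) - z n)⁻¹ * (x - z n) + n
  strictMono_z := hz
  tendsto_atTop := htop
  tendsto_atBot := hbot
  F_left n := by simp
  F_right n := by
    simp only [inv_mul_cancel₀ (sub_pos.2 (hz (lt_add_one n))).ne', add_comm]
  strictMonoOn_F n _ _ _ _ h :=
    add_lt_add_left (mul_lt_mul_of_pos_left (sub_lt_sub_right h _)
      (inv_pos.2 (sub_pos.2 (hz (lt_add_one n))))) _
  continuousOn_F n := by fun_prop

lemma linearInterpolation_mem_plSubgroup (z : ℤ → ℝ) (hz : StrictMono z)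
    (htop : Tendsto z atTop atTop) (hbot : Tendsto z atBot atBot) :
    (linearInterpolation z hz htop hbot).toOrderIso.toEquiv ∈ plSubgroup :=
  GluingData.toEquiv_mem_plSubgroup _ fun n => .of_forall fun _ =>
    ⟨(z (n + 1) - z n)⁻¹, n - (z (n + 1) - z n)⁻¹ * z n, .of_forall fun y => by
      simp only [linearInterpolation]
      ring⟩

lemma exists_lt_apply_forall_le {f : Equiv.Perm ℝ} (hf : Continuous f) (hmono : StrictMono f) :
    ∃ B : Equiv.Perm ℝ, Continuous B ∧ (∀ x, x < B x) ∧ ∀ x, f x ≤ B x := by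
  have hc : Continuous fun x => max (f x) (x + 1) := by fun_prop
  have hBmono : StrictMono fun x => max (f x) (x + 1) := fun a b hab =>
    max_lt_max (hmono hab) (add_lt_add_left hab 1)
  have htop : Tendsto (fun x => max (f x) (x + 1)) atTop atTop :=
    tendsto_atTop_mono (fun x => le_max_right _ _) (tendsto_atTop_add_const_right _ 1 tendsto_id)
  have hbot : Tendsto (fun x => max (f x) (x + 1)) atBot atBot := by
    refine tendsto_atBot_atBot.2 fun c => ⟨min (f.symm c) (c - 1), fun x hx => max_le ?_ ?_⟩
    · simpa using hmono.monotone (hx.trans (min_le_left _ _))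
    · linarith [min_le_right (f.symm c) (c - 1)]
  exact ⟨Equiv.ofBijective _ ⟨hBmono.injective, hc.surjective htop hbot⟩, hc,
    fun x => lt_max_of_lt_right (lt_add_one x), fun x => le_max_left _ _⟩

lemma exists_isReversibleIn_apply_comp_lt_of_strictMono {f : Equiv.Perm ℝ}
    (hf : f ∈ plSubgroup) (hmono : StrictMono f) :
    ∃ ι ∈ plSubgroup, IsReversibleIn plSubgroup ι ∧ ∀ x, ι (f x) < x := by
  obtain ⟨B, hBc, hBlt, hfB⟩ := exists_lt_apply_forall_le hf.1.1 hmono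
  let u := linearInterpolation (fun n => (B ^ n) 0) (strictMono_zpow_apply hBlt 0)
    (tendsto_zpow_apply_atTop hBc hBlt 0) (tendsto_zpow_apply_atBot hBc hBlt 0)
  have hU := linearInterpolation_mem_plSubgroup _ (strictMono_zpow_apply hBlt 0)
    (tendsto_zpow_apply_atTop hBc hBlt 0) (tendsto_zpow_apply_atBot hBc hBlt 0)
  set U := u.toOrderIso
  refine ⟨U.toEquiv⁻¹ * Equiv.addRight (-2) * U.toEquiv,
    mul_mem (mul_mem (inv_mem hU) (addRight_mem_plSubgroup _)) hU,
    (isReversibleIn_addRight _).conj hU, fun x => ?_⟩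
  obtain ⟨n, hx⟩ := u.exists_mem_Ico x
  have hfx : U (f x) < n + 2 := by
    have : f x < u.z (n + 2) := by
      calc f x < f (u.z (n + 1)) := hmono hx.2
        _ ≤ B (u.z (n + 1)) := hfB _
        _ = u.z (n + 2) := by
          simp only [u, linearInterpolation, ← Equiv.Perm.zpow_add_one_apply]
          ring_nf
    simpa [U, u.toOrderIso_z] using U.strictMono this
  have hUx : (n : ℝ) ≤ U x := u.toOrderIso_z n ▸ U.monotone hx.1
  show U.symm (U (f x) + -2) < x
  rw [U.symm_apply_lt]
  linarith

lemma exists_strictMono_forall_neg_le_apply {f : Equiv.Perm ℝ} (hanti : StrictAnti f) :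
    ∃ z : ℤ → ℝ, StrictMono z ∧ Tendsto z atTop atTop ∧ Tendsto z atBot atBot ∧
      ∀ n, z (-n) ≤ f (z (n + 1)) := by
  have hanti' : StrictAnti f.symm := fun a b h =>
    hanti.lt_iff_gt.1 (by simpa using h : f (f.symm a) < f (f.symm b))
  set μ : ℝ → ℝ := fun x => min (f x) (f.symm x)
  have hμ : StrictAnti μ := fun a b h => min_lt_min (hanti h) (hanti' h)
  set z : ℤ → ℝ := fun n => if 0 < n then n else min (μ (1 - n)) n
  have hz_le (n : ℤ) : z n ≤ n := by
    by_cases hn : 0 < n <;> simp [z, hn]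
  have hz_pos {n : ℤ} (hn : 0 < n) : z n = n := if_pos hn
  have hz_nonpos {n : ℤ} (hn : n ≤ 0) : z n = min (μ (1 - n)) n := if_neg hn.not_gt
  refine ⟨z, strictMono_int_of_lt_succ fun n => ?_,
    tendsto_atTop_mono' _ ((eventually_gt_atTop 0).mono fun n hn => (hz_pos hn).ge)
      tendsto_intCast_atTop_atTop,
    tendsto_atBot_mono hz_le (tendsto_intCast_atBot_iff.2 tendsto_id), fun n => ?_⟩
  · rcases lt_trichotomy n 0 with hn | rfl | hn
    · rw [hz_nonpos hn.le, hz_nonpos (by omega)]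
      push_cast
      exact min_lt_min (hμ (by linarith)) (by linarith)
    · rw [hz_pos (by norm_num : (0 : ℤ) < 0 + 1)]
      have := hz_le 0
      push_cast at this ⊢
      linarith
    · rw [hz_pos hn, hz_pos (by omega)]
      push_cast
      linarith
  · rcases le_or_gt 0 n with hn | hn
    · rw [hz_nonpos (by omega), hz_pos (by omega)]
      push_cast
      exact (min_le_left _ _).trans ((min_le_left _ _).trans (le_of_eq (by ring_nf)))
    · have : z (n + 1) ≤ f.symm (-n) := by
        rw [hz_nonpos (by omega)]
        push_cast
        exact (min_le_left _ _).trans ((min_le_right _ _).trans (le_of_eq (by ring_nf)))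
      simpa [hz_pos (by omega : 0 < -n)] using hanti.antitone this

lemma exists_isReversibleIn_apply_comp_lt_of_strictAnti {f : Equiv.Perm ℝ}
    (hanti : StrictAnti f) :
    ∃ ι ∈ plSubgroup, IsReversibleIn plSubgroup ι ∧ ∀ x, ι (f x) < x := by
  obtain ⟨z, hz, htop, hbot, hzf⟩ := exists_strictMono_forall_neg_le_apply hanti
  let u := linearInterpolation z hz htop hbot
  have hU := linearInterpolation_mem_plSubgroup z hz htop hbot
  set U := u.toOrderIso
  refine ⟨U.toEquiv⁻¹ * Equiv.neg ℝ * U.toEquiv,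
    mul_mem (mul_mem (inv_mem hU) neg_mem_plSubgroup) hU, isReversibleIn_neg.conj hU, fun x => ?_⟩
  obtain ⟨n, hx⟩ := u.exists_mem_Ico x
  have hfx : -(n : ℝ) < U (f x) :=
    calc -(n : ℝ) = U (u.z (-n)) := by rw [u.toOrderIso_z]; push_cast; ring
      _ < U (f x) := U.strictMono ((hzf n).trans_lt (hanti hx.2))
  have hUx : (n : ℝ) ≤ U x := u.toOrderIso_z n ▸ U.monotone hx.1
  show U.symm (-U (f x)) < x
  rw [U.symm_apply_lt]
  linarith

lemma exists_isReversibleIn_apply_comp_lt {f : Equiv.Perm ℝ} (hf : f ∈ plSubgroup) :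
    ∃ ι ∈ plSubgroup, IsReversibleIn plSubgroup ι ∧ ∀ x, ι (f x) < x :=
  (hf.1.1.strictMono_of_inj f.injective).elim
    (exists_isReversibleIn_apply_comp_lt_of_strictMono hf)
    exists_isReversibleIn_apply_comp_lt_of_strictAnti

/-- PL(ℝ) = R₂(PL(ℝ)): every element of PL(ℝ) is a composite of two elements of PL(ℝ),
each reversible in PL(ℝ). -/
theorem stmt_4 (f : Equiv.Perm ℝ) (hf : InPL f) :
    ∃ g h : Equiv.Perm ℝ,
      (InPL g ∧ ∃ k : Equiv.Perm ℝ, InPL k ∧ k * g * k⁻¹ = g⁻¹) ∧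
      (InPL h ∧ ∃ k : Equiv.Perm ℝ, InPL k ∧ k * h * k⁻¹ = h⁻¹) ∧
      f = g * h := by
  obtain ⟨ι, hι, hιrev, hιf⟩ := exists_isReversibleIn_apply_comp_lt hf
  have hιf_mem : ι * f ∈ plSubgroup := mul_mem hι hf
  exact ⟨ι⁻¹, ι * f, ⟨inv_mem hι, hιrev.inv⟩,
    ⟨hιf_mem, isReversibleIn_of_apply_lt hιf_mem hιf⟩, by group⟩
end

section
/- Every strictly decreasing homeomorphism of ℝ can be written as a composite of three involutions among the homeomorphisms of ℝ, and every homeomorphism of ℝ can be written as a composite of four involutions among the homeomorphisms of ℝ. (In other words, H⁻(ℝ) ⊆ I₃(H(ℝ)) and H(ℝ) = I₄(H(ℝ)).) -/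
/-!
A fixed-point-free increasing homeomorphism `k` of `ℝ` is conjugate to the translation
`t ↦ t + 1`, which is the product of the reflections `t ↦ 1 - t` and `t ↦ -t`; so `k` is a product
of two involutions. A decreasing homeomorphism `f` lies strictly below the decreasing involution
`τ = max (f + 1) (f + 1)⁻¹`, so `τ ∘ f` is increasing with `x < τ (f x)`, and `f = τ ∘ (τ ∘ f)` is a
product of three involutions. An increasing `f` is `(f ∘ (-·)) ∘ (-·)`, a product of four.
-/

open Filter Function Topology

lemma Int.exists_le_lt_succ_of_tendsto {α : Type*} [LinearOrder α] {u : ℤ → α}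
    (hu : StrictMono u) (hbot : Tendsto u atBot atBot) (htop : Tendsto u atTop atTop) (y : α) :
    ∃ n, u n ≤ y ∧ y < u (n + 1) := by
  obtain ⟨N, hN⟩ := (htop.eventually_ge_atTop y).exists
  obtain ⟨M, hM⟩ := (hbot.eventually_le_atBot y).exists
  obtain ⟨n, hn, hmax⟩ := Int.exists_greatest_of_bdd (P := fun n => u n ≤ y)
    ⟨N, fun n hn => hu.le_iff_le.mp (hn.trans hN)⟩ ⟨M, hM⟩
  exact ⟨n, hn, lt_of_not_ge fun h => (hmax _ h).not_gt (lt_add_one n)⟩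

namespace OrderIso

section Preorder

variable {α : Type*} [Preorder α] (k : α ≃o α)

lemma zpow_add_one_apply (n : ℤ) (x : α) : (k ^ (n + 1)) x = k ((k ^ n) x) := by
  rw [add_comm, zpow_one_add]; rfl

lemma strictMono_zpow_apply (hk : ∀ x, x < k x) (x : α) : StrictMono fun n : ℤ => (k ^ n) x :=
  strictMono_int_of_lt_succ fun n => by
    rw [zpow_add_one]; exact (k ^ n).strictMono (hk x)

end Preorder

variable {α : Type*} [ConditionallyCompleteLinearOrder α] [TopologicalSpace α] [OrderTopology α]
  (k : α ≃o α)

lemma apply_eq_of_tendsto_zpow_apply {l : Filter ℤ} [l.NeBot] (hl : Tendsto (· + 1) l l) {x y : α}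
    (h : Tendsto (fun n : ℤ => (k ^ n) x) l (𝓝 y)) : k y = y := by
  refine tendsto_nhds_unique ?_ (h.comp hl)
  simp only [comp_def, zpow_add_one_apply]
  exact (k.continuous.tendsto y).comp h

lemma tendsto_zpow_apply_atTop (hk : ∀ x, x < k x) (x : α) :
    Tendsto (fun n : ℤ => (k ^ n) x) atTop atTop := by
  refine (tendsto_atTop_of_monotone (k.strictMono_zpow_apply hk x).monotone).resolve_right ?_
  rintro ⟨y, hy⟩
  exact (hk y).ne' <|
    k.apply_eq_of_tendsto_zpow_apply (tendsto_atTop_add_const_right _ 1 tendsto_id) hy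

lemma tendsto_zpow_apply_atBot (hk : ∀ x, x < k x) (x : α) :
    Tendsto (fun n : ℤ => (k ^ n) x) atBot atBot := by
  refine (tendsto_atBot_of_monotone (k.strictMono_zpow_apply hk x).monotone).resolve_right ?_
  rintro ⟨y, hy⟩
  exact (hk y).ne' <|
    k.apply_eq_of_tendsto_zpow_apply (tendsto_atBot_add_const_right _ 1 tendsto_id) hy

end OrderIso

section Conjugacy

variable (k : ℝ ≃o ℝ)

/-- `[0, 1)` is mapped affinely onto the fundamental domain `[0, k 0)` of `k`, and `[n, n + 1)`
onto its image under `k ^ n`. -/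
noncomputable def translationConj (t : ℝ) : ℝ := (k ^ ⌊t⌋) (k 0 * Int.fract t)

lemma translationConj_add_one (t : ℝ) : translationConj k (t + 1) = k (translationConj k t) := by
  rw [translationConj, translationConj, Int.floor_add_one, Int.fract_add_one,
    k.zpow_add_one_apply]

variable {k}

lemma translationConj_mem_Ico (hk : ∀ x, x < k x) (t : ℝ) :
    translationConj k t ∈ Set.Ico ((k ^ ⌊t⌋) 0) ((k ^ (⌊t⌋ + 1)) 0) := by
  have hc : 0 < k 0 := hk 0
  rw [zpow_add_one, RelIso.mul_apply]
  exact ⟨(k ^ ⌊t⌋).monotone (mul_nonneg hc.le (Int.fract_nonneg t)),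
    (k ^ ⌊t⌋).strictMono (mul_lt_of_lt_one_right hc (Int.fract_lt_one t))⟩

lemma translationConj_strictMono (hk : ∀ x, x < k x) : StrictMono (translationConj k) := by
  intro s t hst
  rcases (Int.floor_mono hst.le).lt_or_eq with hlt | heq
  · calc translationConj k s < (k ^ (⌊s⌋ + 1)) 0 := (translationConj_mem_Ico hk s).2
      _ ≤ (k ^ ⌊t⌋) 0 := (k.strictMono_zpow_apply hk 0).monotone (Int.add_one_le_iff.mpr hlt)
      _ ≤ translationConj k t := (translationConj_mem_Ico hk t).1
  · have hfract : Int.fract s < Int.fract t := by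
      rw [Int.fract, Int.fract, heq]; linarith
    rw [translationConj, translationConj, heq]
    exact (k ^ ⌊t⌋).strictMono (mul_lt_mul_of_pos_left hfract (hk 0))

lemma translationConj_surjective (hk : ∀ x, x < k x) : Surjective (translationConj k) := by
  intro y
  obtain ⟨n, hn, hn1⟩ := Int.exists_le_lt_succ_of_tendsto (k.strictMono_zpow_apply hk 0)
    (k.tendsto_zpow_apply_atBot hk 0) (k.tendsto_zpow_apply_atTop hk 0) y
  obtain ⟨z, rfl⟩ := (k ^ n).surjective y
  have hc : 0 < k 0 := hk 0
  have hz0 : 0 ≤ z := (k ^ n).le_iff_le.mp hn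
  have hz1 : z < k 0 := by
    rw [zpow_add_one, RelIso.mul_apply] at hn1
    exact (k ^ n).lt_iff_lt.mp hn1
  have hfloor : ⌊n + z / k 0⌋ = n := Int.floor_eq_iff.mpr
    ⟨by linarith [div_nonneg hz0 hc.le], by linarith [(div_lt_one hc).mpr hz1]⟩
  refine ⟨n + z / k 0, ?_⟩
  rw [translationConj, Int.fract, hfloor, add_sub_cancel_left, mul_div_cancel₀ _ hc.ne']

lemma OrderIso.exists_semiconj_add_one (hk : ∀ x, x < k x) :
    ∃ P : ℝ ≃o ℝ, Semiconj P (· + 1) k :=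
  ⟨StrictMono.orderIsoOfSurjective _ (translationConj_strictMono hk)
    (translationConj_surjective hk), translationConj_add_one k⟩

end Conjugacy

lemma StrictAnti.perm_symm {α : Type*} [LinearOrder α] {f : Equiv.Perm α}
    (hf : StrictAnti f) : StrictAnti f.symm :=
  fun x y h => hf.lt_iff_gt.mp (by simpa using h)

lemma Antitone.continuous_of_surjective {α β : Type*} [LinearOrder α] [TopologicalSpace α]
    [OrderTopology α] [LinearOrder β] [TopologicalSpace β] [OrderTopology β] [DenselyOrdered β]
    {f : α → β} (hf : Antitone f) (hs : Surjective f) : Continuous f :=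
  continuous_ofDual.comp <|
    hf.dual_right.continuous_of_surjective (OrderDual.toDual.surjective.comp hs)

lemma Equiv.strictAnti_subLeft {G : Type*} [AddCommGroup G] [PartialOrder G] [IsOrderedAddMonoid G]
    (a : G) : StrictAnti (Equiv.subLeft a) :=
  fun _ _ h => sub_lt_sub_left h a

lemma isHomeo_of_strictAnti {f : Equiv.Perm ℝ} (hf : StrictAnti f) : IsHomeo f :=
  ⟨hf.antitone.continuous_of_surjective f.surjective,
    hf.perm_symm.antitone.continuous_of_surjective f.symm.surjective⟩

lemma isHomeo_mul {f g : Equiv.Perm ℝ} (hf : IsHomeo f) (hg : IsHomeo g) : IsHomeo (f * g) :=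
  ⟨hf.1.comp hg.1, hg.2.comp hf.2⟩

lemma isHomeo_inv {f : Equiv.Perm ℝ} (hf : IsHomeo f) : IsHomeo f⁻¹ :=
  ⟨hf.2, hf.1⟩

def IsHomeoInvolution (τ : Equiv.Perm ℝ) : Prop := IsHomeo τ ∧ τ * τ = 1

lemma IsHomeoInvolution.conj {p τ : Equiv.Perm ℝ} (hp : IsHomeo p) (hτ : IsHomeoInvolution τ) :
    IsHomeoInvolution (p * τ * p⁻¹) :=
  ⟨isHomeo_mul (isHomeo_mul hp hτ.1) (isHomeo_inv hp), by
    rw [conj_mul, hτ.2, mul_one, mul_inv_cancel]⟩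

lemma isHomeoInvolution_subLeft (a : ℝ) : IsHomeoInvolution (Equiv.subLeft a) :=
  ⟨isHomeo_of_strictAnti (Equiv.strictAnti_subLeft a), by ext; simp⟩

lemma exists_two_involutions_of_lt {k : Equiv.Perm ℝ} (hk : StrictMono k) (hlt : ∀ x, x < k x) :
    ∃ σ ρ, IsHomeoInvolution σ ∧ IsHomeoInvolution ρ ∧ k = σ * ρ := by
  obtain ⟨P, hP⟩ := OrderIso.exists_semiconj_add_one (k := ⟨k, hk.le_iff_le⟩) hlt
  have hPh : IsHomeo P.toEquiv := ⟨P.continuous, P.symm.continuous⟩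
  refine ⟨_, _, (isHomeoInvolution_subLeft 1).conj hPh, (isHomeoInvolution_subLeft 0).conj hPh, ?_⟩
  ext x
  have hx := hP (P.symm x)
  rw [P.apply_symm_apply] at hx
  rw [conj_mul, Equiv.Perm.mul_apply, Equiv.Perm.mul_apply, Equiv.Perm.mul_apply,
    Equiv.subLeft_apply, Equiv.subLeft_apply, zero_sub, sub_neg_eq_add, add_comm]
  exact hx.symm

lemma StrictAnti.involutive_max_apply_symm {α : Type*} [LinearOrder α] {g : Equiv.Perm α}
    (hg : StrictAnti g) : Involutive fun x => max (g x) (g.symm x) := by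
  -- the graphs of `g` and `g.symm` are mirror images in the diagonal, hence so is that of their max
  have key : ∀ e : Equiv.Perm α, StrictAnti e → ∀ x, e.symm x ≤ e x →
      max (e (e x)) (e.symm (e x)) = x := fun e he x h => by
    rw [e.symm_apply_apply]
    exact max_eq_right ((he.antitone h).trans_eq (e.apply_symm_apply x))
  intro x
  rcases le_total (g.symm x) (g x) with h | h
  · simp only [max_eq_left h]
    exact key g hg x h
  · simp only [max_eq_right h]
    rw [max_comm]
    simpa using key g.symm hg.perm_symm x (by simpa using h)

lemma exists_strictAnti_involutive_gt {f : Equiv.Perm ℝ} (hf : StrictAnti f) :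
    ∃ τ : Equiv.Perm ℝ, StrictAnti τ ∧ Involutive τ ∧ ∀ x, f x < τ x := by
  set g : Equiv.Perm ℝ := f.trans (Equiv.addRight 1)
  have hg : StrictAnti g := fun a b h => add_lt_add_left (hf h) 1
  refine ⟨hg.involutive_max_apply_symm.toPerm _, fun a b h => max_lt_max (hg h) (hg.perm_symm h),
    hg.involutive_max_apply_symm, fun x => ?_⟩
  exact (lt_add_one (f x)).trans_le (le_max_left (g x) _)

lemma exists_three_involutions_of_strictAnti {f : Equiv.Perm ℝ} (hf : StrictAnti f) :
    ∃ τ₁ τ₂ τ₃, IsHomeoInvolution τ₁ ∧ IsHomeoInvolution τ₂ ∧ IsHomeoInvolution τ₃ ∧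
      f = τ₁ * τ₂ * τ₃ := by
  obtain ⟨τ, hτ, hττ, hfτ⟩ := exists_strictAnti_involutive_gt hf
  obtain ⟨σ, ρ, hσ, hρ, hk⟩ := exists_two_involutions_of_lt (k := τ * f) (hτ.comp hf) fun x => by
    simpa [hττ x] using hτ (hfτ x)
  have hτ' : IsHomeoInvolution τ := ⟨isHomeo_of_strictAnti hτ, Equiv.ext hττ⟩
  refine ⟨τ, σ, ρ, hτ', hσ, hρ, ?_⟩
  rw [mul_assoc, ← hk, ← mul_assoc, hτ'.2, one_mul]

/-- H⁻(ℝ) ⊆ I₃(H(ℝ)) and H(ℝ) = I₄(H(ℝ)). -/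
theorem stmt_9 :
    (∀ f : Equiv.Perm ℝ, IsHomeo f → StrictAnti (⇑f) →
      ∃ τ₁ τ₂ τ₃ : Equiv.Perm ℝ,
        (IsHomeo τ₁ ∧ τ₁ * τ₁ = 1) ∧ (IsHomeo τ₂ ∧ τ₂ * τ₂ = 1) ∧
        (IsHomeo τ₃ ∧ τ₃ * τ₃ = 1) ∧ f = τ₁ * τ₂ * τ₃) ∧
    (∀ f : Equiv.Perm ℝ, IsHomeo f →
      ∃ τ₁ τ₂ τ₃ τ₄ : Equiv.Perm ℝ,
        (IsHomeo τ₁ ∧ τ₁ * τ₁ = 1) ∧ (IsHomeo τ₂ ∧ τ₂ * τ₂ = 1) ∧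
        (IsHomeo τ₃ ∧ τ₃ * τ₃ = 1) ∧ (IsHomeo τ₄ ∧ τ₄ * τ₄ = 1) ∧
        f = τ₁ * τ₂ * τ₃ * τ₄) := by
  refine ⟨fun f _ hf => exists_three_involutions_of_strictAnti hf, fun f hf => ?_⟩
  rcases hf.1.strictMono_of_inj f.injective with hmono | hanti
  · have hneg := isHomeoInvolution_subLeft 0
    obtain ⟨τ₁, τ₂, τ₃, h₁, h₂, h₃, heq⟩ := exists_three_involutions_of_strictAnti
      (f := f * Equiv.subLeft 0) (hmono.comp_strictAnti (Equiv.strictAnti_subLeft 0))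
    refine ⟨τ₁, τ₂, τ₃, _, h₁, h₂, h₃, hneg, ?_⟩
    rw [← heq, mul_assoc, hneg.2, mul_one]
  · obtain ⟨τ₁, τ₂, τ₃, h₁, h₂, h₃, heq⟩ := exists_three_involutions_of_strictAnti hanti
    exact ⟨τ₁, τ₂, τ₃, 1, h₁, h₂, h₃, ⟨⟨continuous_id, continuous_id⟩, mul_one 1⟩,
      by rw [mul_one, heq]⟩
end

section
/- Let f be a strictly decreasing element of PL(ℝ). Then f is reversible in PL(ℝ) (i.e., there exists h ∈ PL(ℝ) with h ∘ f ∘ h⁻¹ = f⁻¹) if and only if f is an involution (i.e., f ∘ f = id). -/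
/-!
Let `g = f ∘ f`, an increasing PL map fixing the fixed point `p` of `f`. A map `h` reversing `f`
also reverses `g`, so it fixes `p` and preserves the fixed-point set of `g`; replacing `h` by
`f ∘ h` if necessary, `h` is increasing. If `g ≠ id`, let `u ≥ p` be the right end of the interval
of fixed points of `g` through `p`. The right slope `k` of `g` at `u` is not `1`, otherwise `g`
would be the identity slightly to the right of `u`. Being increasing, `h` fixes `u`, and comparing
right slopes at `u` in `g ∘ h ∘ g = h` gives `k * c * k = c` with `c > 0`, so `k = 1`.
-/

open Set Filter Topology Function

/-- One-sided affine germs of PL maps are modelled by `s = Ioi x` and `s = Iio x`. -/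
def HasSlopeWithin (f : ℝ → ℝ) (a : ℝ) (s : Set ℝ) (x : ℝ) : Prop :=
  ∀ᶠ y in 𝓝[s] x, f y = f x + a * (y - x)

namespace HasSlopeWithin

variable {f g : ℝ → ℝ} {a b : ℝ} {s t : Set ℝ} {x : ℝ}

theorem tendsto (hf : HasSlopeWithin f a s x) : Tendsto f (𝓝[s] x) (𝓝 (f x)) := by
  have hA : Tendsto (fun y => f x + a * (y - x)) (𝓝[s] x) (𝓝 (f x)) :=
    ((by fun_prop : Continuous fun y => f x + a * (y - x)).tendsto' x _ (by ring)).mono_left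
      nhdsWithin_le_nhds
  exact hA.congr' (hf.mono fun _ hy => hy.symm)

theorem comp (hg : HasSlopeWithin g b t (f x)) (hf : HasSlopeWithin f a s x)
    (hst : MapsTo f s t) : HasSlopeWithin (g ∘ f) (b * a) s x := by
  have hft : Tendsto f (𝓝[s] x) (𝓝[t] (f x)) :=
    tendsto_nhdsWithin_iff.2 ⟨hf.tendsto, eventually_mem_nhdsWithin.mono fun _ hy => hst hy⟩
  filter_upwards [hft.eventually hg, hf] with y hgy hfy
  rw [comp_apply, comp_apply, hgy, hfy]
  ring

theorem unique [(𝓝[s] x).NeBot] (hx : x ∉ s) (ha : HasSlopeWithin f a s x)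
    (hb : HasSlopeWithin f b s x) : a = b := by
  obtain ⟨y, hya, hyb, hys⟩ := (ha.and (hb.and self_mem_nhdsWithin)).exists
  have hyx : y - x ≠ 0 := sub_ne_zero.2 (ne_of_mem_of_not_mem hys hx)
  exact mul_right_cancel₀ hyx (by linarith)

theorem pos_of_strictMono (hf : HasSlopeWithin f a (Ioi x) x) (hmono : StrictMono f) : 0 < a := by
  obtain ⟨y, hy, hxy⟩ := (hf.and self_mem_nhdsWithin).exists
  have hfxy := hmono hxy
  exact (mul_pos_iff_of_pos_right (sub_pos.2 hxy)).1 (by linarith)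

theorem of_eqOn {I : Set ℝ} [(𝓝[s] x).NeBot] (hc : ContinuousWithinAt f s x) (hI : I ∈ 𝓝[s] x)
    (hf : EqOn f (fun y => a * y + b) I) : HasSlopeWithin f a s x := by
  have hfx : f x = a * x + b :=
    tendsto_nhds_unique (hc.congr' (eventuallyEq_of_mem hI hf))
      (((by fun_prop : Continuous fun y => a * y + b).tendsto x).mono_left nhdsWithin_le_nhds)
  filter_upwards [hI] with y hy
  rw [hf hy, hfx]
  ring

end HasSlopeWithin

theorem IsOpen.exists_eqOn_affine_of_isLocallyAffineAt {f : ℝ → ℝ} {s : Set ℝ}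
    (hs : IsOpen s) (hs' : IsPreconnected s) (hf : ∀ y ∈ s, IsLocallyAffineAt f y) :
    ∃ a b, EqOn f (fun y => a * y + b) s := by
  have hloc : ∀ y ∈ s, HasDerivAt f (deriv f y) y ∧ ∀ᶠ z in 𝓝 y, deriv f z = deriv f y := by
    intro y hy
    obtain ⟨a, b, hab⟩ := hf y hy
    have hA : ∀ z, HasDerivAt (fun w => a * w + b) a z := fun z => by
      simpa using ((hasDerivAt_id z).const_mul a).add_const b
    have hderiv : ∀ᶠ z in 𝓝 y, deriv f z = a :=
      hab.eventually_nhds.mono fun z hz => (EventuallyEq.deriv_eq hz).trans (hA z).deriv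
    refine ⟨?_, hderiv.mono fun z hz => hz.trans hderiv.self_of_nhds.symm⟩
    rw [hderiv.self_of_nhds]
    exact (hA y).congr_of_eventuallyEq hab
  rcases s.eq_empty_or_nonempty with rfl | ⟨x₀, hx₀⟩
  · exact ⟨0, 0, eqOn_empty _ _⟩
  have hconst : ∀ y ∈ s, deriv f y = deriv f x₀ := fun y hy =>
    hs'.induction₂ (fun y z => deriv f y = deriv f z)
      (fun y hy => ((hloc y hy).2.filter_mono nhdsWithin_le_nhds).mono fun _ hz => hz.symm)
      (fun _ _ _ _ _ _ => Eq.trans) (fun _ _ _ _ => Eq.symm) hy hx₀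
  obtain ⟨b, hb⟩ := hs.exists_eq_add_of_deriv_eq hs' (g := fun y => deriv f x₀ * y)
    (fun y hy => (hloc y hy).1.differentiableAt.differentiableWithinAt) (by fun_prop)
    (fun y hy => by simp [hconst y hy])
  exact ⟨deriv f x₀, b, hb⟩

theorem exists_hasSlopeWithin_Ioi_of_eventually {f : ℝ → ℝ} {x : ℝ} (hc : ContinuousAt f x)
    (hf : ∀ᶠ y in 𝓝[>] x, IsLocallyAffineAt f y) : ∃ a, HasSlopeWithin f a (Ioi x) x := by
  obtain ⟨v, hxv, hv⟩ := mem_nhdsGT_iff_exists_Ioo_subset.1 hf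
  obtain ⟨a, b, hab⟩ :=
    isOpen_Ioo.exists_eqOn_affine_of_isLocallyAffineAt isPreconnected_Ioo fun y hy => hv hy
  exact ⟨a, .of_eqOn hc.continuousWithinAt (Ioo_mem_nhdsGT hxv) hab⟩

theorem exists_hasSlopeWithin_Iio_of_eventually {f : ℝ → ℝ} {x : ℝ} (hc : ContinuousAt f x)
    (hf : ∀ᶠ y in 𝓝[<] x, IsLocallyAffineAt f y) : ∃ a, HasSlopeWithin f a (Iio x) x := by
  obtain ⟨v, hvx, hv⟩ := mem_nhdsLT_iff_exists_Ioo_subset.1 hf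
  obtain ⟨a, b, hab⟩ :=
    isOpen_Ioo.exists_eqOn_affine_of_isLocallyAffineAt isPreconnected_Ioo fun y hy => hv hy
  exact ⟨a, .of_eqOn hc.continuousWithinAt (Ioo_mem_nhdsLT hvx) hab⟩

namespace InPL

variable {f : Equiv.Perm ℝ}

theorem eventually_isLocallyAffineAt (hf : InPL f) (x : ℝ) :
    ∀ᶠ y in 𝓝[≠] x, IsLocallyAffineAt f y := by
  have h := hf.2 x
  rw [AccPt, not_neBot, inf_principal_eq_bot] at h
  exact mem_of_superset h fun _ hy => not_not.1 hy

theorem exists_hasSlopeWithin_Ioi (hf : InPL f) (x : ℝ) : ∃ a, HasSlopeWithin f a (Ioi x) x :=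
  exists_hasSlopeWithin_Ioi_of_eventually hf.1.1.continuousAt
    ((hf.eventually_isLocallyAffineAt x).filter_mono (nhdsGT_le_nhdsNE x))

theorem exists_hasSlopeWithin_Iio (hf : InPL f) (x : ℝ) : ∃ a, HasSlopeWithin f a (Iio x) x :=
  exists_hasSlopeWithin_Iio_of_eventually hf.1.1.continuousAt
    ((hf.eventually_isLocallyAffineAt x).filter_mono (nhdsLT_le_nhdsNE x))

end InPL

theorem inPL_one : InPL 1 := by
  refine ⟨⟨continuous_id, continuous_id⟩, fun x => ?_⟩
  have : {y : ℝ | ¬ IsLocallyAffineAt (⇑(1 : Equiv.Perm ℝ)) y} = ∅ :=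
    eq_empty_of_forall_notMem fun y hy => hy ⟨1, 0, .of_forall fun z => by simp⟩
  rw [AccPt, this, principal_empty, inf_bot_eq]
  exact fun h => h.ne rfl

theorem exists_isFixedPt_of_antitone {f : ℝ → ℝ} (hc : Continuous f) (ha : Antitone f) :
    ∃ p, IsFixedPt f p := by
  obtain ⟨p, hp⟩ : (0 : ℝ) ∈ range fun x => f x - x :=
    mem_range_of_exists_le_of_exists_ge (hc.sub continuous_id)
      ⟨max 0 (f 0), by
        have := ha (le_max_left 0 (f 0)); have := le_max_right 0 (f 0); linarith⟩
      ⟨min 0 (f 0), by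
        have := ha (min_le_left 0 (f 0)); have := min_le_right 0 (f 0); linarith⟩
  exact ⟨p, sub_eq_zero.1 hp⟩

theorem StrictAnti.eq_of_isFixedPt {α : Type*} [LinearOrder α] {f : α → α} (hf : StrictAnti f)
    {a b : α} (ha : IsFixedPt f a) (hb : IsFixedPt f b) : a = b := by
  by_contra hab
  rcases lt_or_gt_of_ne hab with h | h <;>
  · have := hf h
    rw [ha.eq, hb.eq] at this
    exact lt_asymm h this

theorem Equiv.Perm.isFixedPt_apply_iff_of_mul_mul_inv_eq_inv {α : Type*} {g h : Equiv.Perm α}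
    (hr : h * g * h⁻¹ = g⁻¹) (x : α) : IsFixedPt g (h x) ↔ IsFixedPt g x := by
  rw [← IsFixedPt.equiv_symm_iff, ← Equiv.Perm.inv_def, ← hr]
  simp [IsFixedPt]

section Endpoint

variable {α : Type*} [LinearOrder α] [TopologicalSpace α] [OrderTopology α] [DenselyOrdered α]
  [NoMaxOrder α] {F : Set α} {p u : α}

theorem OrderIso.apply_le_of_forall_mem_iff (e : α ≃o α) (hF : ∀ x, e x ∈ F ↔ x ∈ F)
    (hp : e p = p) (hpu : p ≤ u) (hIcc : Icc p u ⊆ F) (hgap : ∀ᶠ y in 𝓝[>] u, y ∉ F) :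
    e u ≤ u := by
  by_contra! hlt
  obtain ⟨y, hyF, huy, hyu⟩ := (hgap.and (Ioo_mem_nhdsGT hlt)).exists
  have hy : e.symm y ∈ Icc p u :=
    ⟨e.le_symm_apply.2 (hp.symm ▸ hpu.trans huy.le), e.symm_apply_le.2 hyu.le⟩
  exact hyF (by simpa using (hF (e.symm y)).2 (hIcc hy))

theorem OrderIso.apply_eq_of_forall_mem_iff (e : α ≃o α) (hF : ∀ x, e x ∈ F ↔ x ∈ F)
    (hp : e p = p) (hpu : p ≤ u) (hIcc : Icc p u ⊆ F) (hgap : ∀ᶠ y in 𝓝[>] u, y ∉ F) :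
    e u = u := by
  have hF' : ∀ x, e.symm x ∈ F ↔ x ∈ F := fun x => by simpa using (hF (e.symm x)).symm
  have hp' : e.symm p = p := by rw [e.symm_apply_eq, hp]
  exact le_antisymm (e.apply_le_of_forall_mem_iff hF hp hpu hIcc hgap)
    (e.symm_apply_le.1 (e.symm.apply_le_of_forall_mem_iff hF' hp' hpu hIcc hgap))

end Endpoint

theorem exists_isolated_right_end_of_fixedPoints {g : ℝ → ℝ} (hc : Continuous g)
    (hslope : ∀ x, ∃ k, HasSlopeWithin g k (Ioi x) x) {p : ℝ} (hp : IsFixedPt g p)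
    (hne : ∃ x, p ≤ x ∧ ¬ IsFixedPt g x) :
    ∃ u, p ≤ u ∧ Icc p u ⊆ fixedPoints g ∧ ∀ᶠ y in 𝓝[>] u, ¬ IsFixedPt g y := by
  set R := {x | p ≤ x ∧ ¬ IsFixedPt g x}
  have hbdd : BddBelow R := ⟨p, fun _ hx => hx.1⟩
  set u := sInf R
  have hpu : p ≤ u := le_csInf hne fun _ hx => hx.1
  have hIco : Ico p u ⊆ fixedPoints g := fun x hx =>
    by_contra fun hfix => (csInf_le hbdd ⟨hx.1, hfix⟩).not_gt hx.2
  have hIcc : Icc p u ⊆ fixedPoints g := by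
    rcases hpu.eq_or_lt with hpu | hpu
    · rw [← hpu, Icc_self, singleton_subset_iff]
      exact hp
    · rw [← closure_Ico hpu.ne]
      exact closure_minimal hIco (isClosed_fixedPoints hc)
  have hu : IsFixedPt g u := hIcc ⟨hpu, le_rfl⟩
  obtain ⟨k, hk⟩ := hslope u
  have hk1 : k ≠ 1 := by
    rintro rfl
    obtain ⟨v, huv, hv⟩ := mem_nhdsGT_iff_exists_Ioo_subset.1 hk
    obtain ⟨x, ⟨hpx, hx⟩, hxv⟩ := exists_lt_of_csInf_lt hne huv
    have hux : u < x := (csInf_le hbdd ⟨hpx, hx⟩).lt_of_ne fun hux => hx (hux ▸ hu)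
    have := hv ⟨hux, hxv⟩
    simp only [mem_ofPred_eq, one_mul, hu.eq, add_sub_cancel] at this
    exact hx this
  refine ⟨u, hpu, hIcc, ?_⟩
  filter_upwards [hk, self_mem_nhdsWithin] with y hy huy hfix
  rw [hu.eq] at hy
  have : (k - 1) * (y - u) = 0 := by linear_combination hfix.eq - hy
  rcases mul_eq_zero.1 this with h | h
  · exact hk1 (by linarith)
  · exact (sub_ne_zero.2 (ne_of_gt huy)) h

theorem mul_self_eq_one_of_strictMono_reversing {f : Equiv.Perm ℝ} (hfc : Continuous f)
    (hfa : StrictAnti f) (hfR : ∀ x, ∃ a, HasSlopeWithin f a (Ioi x) x)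
    (hfL : ∀ x, ∃ a, HasSlopeWithin f a (Iio x) x) ⦃h : Equiv.Perm ℝ⦄ (hmono : StrictMono h)
    (hhR : ∀ x, ∃ c, HasSlopeWithin h c (Ioi x) x) (hr : h * f * h⁻¹ = f⁻¹) : f * f = 1 := by
  have hgr : h * (f * f) * h⁻¹ = (f * f)⁻¹ :=
    calc h * (f * f) * h⁻¹ = (h * f * h⁻¹) * (h * f * h⁻¹) := by group
      _ = (f * f)⁻¹ := by rw [hr]; group
  set g := f * f
  have hgmono : StrictMono g := hfa.comp hfa
  have hgR : ∀ x, ∃ k, HasSlopeWithin g k (Ioi x) x := fun x => by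
    obtain ⟨a, ha⟩ := hfR x
    obtain ⟨b, hb⟩ := hfL (f x)
    exact ⟨b * a, hb.comp ha fun _ hy => hfa hy⟩
  obtain ⟨p, hp⟩ := exists_isFixedPt_of_antitone hfc hfa.antitone
  have hhp : h p = p :=
    hfa.eq_of_isFixedPt ((Equiv.Perm.isFixedPt_apply_iff_of_mul_mul_inv_eq_inv hr p).2 hp) hp
  have hgp : IsFixedPt g p := by
    show f (f p) = p
    rw [hp.eq, hp.eq]
  by_contra hg1
  have hne : ∃ x, p ≤ x ∧ ¬ IsFixedPt g x := by
    by_contra! hall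
    refine hg1 (Equiv.ext fun x => ?_)
    rcases le_total p x with hx | hx
    · exact hall x hx
    · exact f.injective (hall (f x) (hp.eq ▸ hfa.antitone hx))
  have hgc : Continuous g := hfc.comp hfc
  obtain ⟨u, hpu, hIcc, hgap⟩ := exists_isolated_right_end_of_fixedPoints hgc hgR hgp hne
  have hu : IsFixedPt g u := hIcc ⟨hpu, le_rfl⟩
  have hhu : h u = u := OrderIso.apply_eq_of_forall_mem_iff ⟨h, hmono.le_iff_le⟩
    (Equiv.Perm.isFixedPt_apply_iff_of_mul_mul_inv_eq_inv hgr) hhp hpu hIcc hgap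
  obtain ⟨k, hk⟩ := hgR u
  obtain ⟨c, hc⟩ := hhR u
  have hghg : ⇑g ∘ ⇑h ∘ ⇑g = ⇑h := by
    have : g * h * g = h :=
      calc g * h * g = g * (h * g * h⁻¹) * h := by group
        _ = h := by rw [hgr]; group
    exact congrArg DFunLike.coe this
  have hslope : HasSlopeWithin h (k * (c * k)) (Ioi u) u := by
    rw [← hghg]
    refine HasSlopeWithin.comp ?_ ((?_ : HasSlopeWithin h c _ (g u)).comp hk fun _ hy => hgmono hy)
      fun _ hy => (hmono.comp hgmono) hy
    · rwa [comp_apply, hu.eq, hhu]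
    · rwa [hu.eq]
  have hkc : k * (c * k) = c := hslope.unique self_notMem_Ioi hc
  have hkk : k * k = 1 :=
    mul_left_cancel₀ (hc.pos_of_strictMono hmono).ne' (by linear_combination hkc)
  have hk1 : k = 1 :=
    (mul_self_eq_one_iff.1 hkk).resolve_right fun _ => by linarith [hk.pos_of_strictMono hgmono]
  obtain ⟨y, hyfix, hy⟩ := (hgap.and hk).exists
  exact hyfix (hy.trans (by rw [hu.eq, hk1]; ring))

/-- A strictly decreasing element of PL(ℝ) is reversible in PL(ℝ) iff it is an involution. -/
theorem stmt_14 (f : Equiv.Perm ℝ) (hf : InPL f) (hfa : StrictAnti (⇑f)) :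
    (∃ h : Equiv.Perm ℝ, InPL h ∧ h * f * h⁻¹ = f⁻¹) ↔ f * f = 1 := by
  refine ⟨fun ⟨h, hh, hr⟩ => ?_, fun hff => ⟨1, inPL_one, ?_⟩⟩
  · have key := mul_self_eq_one_of_strictMono_reversing hf.1.1 hfa hf.exists_hasSlopeWithin_Ioi
      hf.exists_hasSlopeWithin_Iio
    rcases hh.1.1.strictMono_of_inj h.injective with hmono | hanti
    · exact key hmono hh.exists_hasSlopeWithin_Ioi hr
    · -- the increasing map `f * h` also reverses `f`
      refine key (h := f * h) (hfa.comp hanti) (fun x => ?_) ?_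
      · obtain ⟨c, hc⟩ := hh.exists_hasSlopeWithin_Ioi x
        obtain ⟨b, hb⟩ := hf.exists_hasSlopeWithin_Iio (h x)
        exact ⟨b * c, hb.comp hc fun _ hy => hanti hy⟩
      · calc f * h * f * (f * h)⁻¹ = f * (h * f * h⁻¹) * f⁻¹ := by group
          _ = f⁻¹ := by rw [hr]; group
  · rw [inv_one, mul_one, one_mul]
    exact (inv_eq_of_mul_eq_one_right hff).symm
end
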